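/- Let S be an axis-aligned square with center q, let α be a real with 0 < α < 2π, and let i = max(3, ⌈log₂(2π/α)⌉ + 1). Then every closed angular sector with apex q and angle α contains at least one triangle of Slicing(i) of S. -/

import Mathlib

open Real

noncomputable section

/-- Points of the Euclidean plane. -/
abbrev Pt := EuclideanSpace ℝ (Fin 2)

/-- The unit vector in direction angle `a`. -/
def unitDir (a : ℝ) : Pt := WithLp.toLp 2 ![Real.cos a, Real.sin a]

/-- The closed angular sector with apex `p`, swept clockwise from the half-line in
direction angle `a` through angle `θ` (it consists of the points lying on the half-lines
from `p` in the direction angles `a - t` for `0 ≤ t ≤ θ`, including both bounding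
half-lines). -/
def sector (p : Pt) (a θ : ℝ) : Set Pt :=
  {q | ∃ r : ℝ, 0 ≤ r ∧ ∃ t : ℝ, 0 ≤ t ∧ t ≤ θ ∧ q = p + r • unitDir (a - t)}

/-- The axis-aligned square with center `q` and side length `x`. -/
def square (q : Pt) (x : ℝ) : Set Pt :=
  {y | y 0 ∈ Set.Icc (q 0 - x / 2) (q 0 + x / 2) ∧ y 1 ∈ Set.Icc (q 1 - x / 2) (q 1 + x / 2)}

/-- The tile in position `(a, b)` of `Tiling(m)` of the square with center `q` and side
length `x`: the `(a, b)`-th of the `4^m` closed congruent subsquares of side `x / 2^m`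
arranged in a `2^m × 2^m` grid. -/
def tile (q : Pt) (x : ℝ) (m : ℕ) (a b : ℕ) : Set Pt :=
  {y | y 0 ∈ Set.Icc (q 0 - x / 2 + a * (x / 2 ^ m)) (q 0 - x / 2 + (a + 1) * (x / 2 ^ m)) ∧
       y 1 ∈ Set.Icc (q 1 - x / 2 + b * (x / 2 ^ m)) (q 1 - x / 2 + (b + 1) * (x / 2 ^ m))}

/-- `t` is a tile of `Tiling(m)` of the square with center `q` and side length `x`. -/
def IsTile (q : Pt) (x : ℝ) (m : ℕ) (t : Set Pt) : Prop :=
  ∃ a b : ℕ, a < 2 ^ m ∧ b < 2 ^ m ∧ t = tile q x m a b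

/-- The `k`-th piece of `Slicing(i)` of the square with center `q` and side length `x`:
the part of the square lying in the angular sector bounded by the half-lines from `q` at
direction angles `2πk/2^i` and `2π(k+1)/2^i` (for `i ≥ 3` this piece is a triangle). -/
def slicePiece (q : Pt) (x : ℝ) (i k : ℕ) : Set Pt :=
  {y | ∃ r : ℝ, 0 ≤ r ∧ ∃ θ : ℝ, 2 * π * k / 2 ^ i ≤ θ ∧ θ ≤ 2 * π * (k + 1) / 2 ^ i ∧
    y = q + r • unitDir θ} ∩ square q x

/-- `T` is a triangle of `Slicing(i)` of the square with center `q` and side length `x`. -/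
def IsSliceTriangle (q : Pt) (x : ℝ) (i : ℕ) (T : Set Pt) : Prop :=
  ∃ k : ℕ, k < 2 ^ i ∧ T = slicePiece q x i k

/-- The vertex of `Slicing(i)` on the boundary of the square of side 2 centered at the
origin: the intersection of the `k`-th slicing half-line with the boundary of the square. -/
def sliceVertex (i k : ℕ) : Pt :=
  (max |Real.cos (2 * π * k / 2 ^ i)| |Real.sin (2 * π * k / 2 ^ i)|)⁻¹ •
    unitDir (2 * π * k / 2 ^ i)

/-- The set of side lengths of the triangles of `Slicing(i)` of the square of side 2
centered at the origin (the triangle `k` has vertices `0`, `sliceVertex i k` and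
`sliceVertex i (k+1)`); the ratios of side lengths are independent of the size of the
square. -/
def sideLengths (i : ℕ) : Set ℝ :=
  ⋃ k ∈ Set.Iio (2 ^ i), {‖sliceVertex i k‖, dist (sliceVertex i k) (sliceVertex i (k + 1))}

/-- `ρ i`: the maximum of `⌈a/b⌉` over all side lengths `a`, `b` of triangles of
`Slicing(i)` of a square. -/
def rho (i : ℕ) : ℕ :=
  sSup {n : ℕ | ∃ a ∈ sideLengths i, ∃ b ∈ sideLengths i, n = ⌈a / b⌉₊}

/-- `φ(i) = i · ρ i`. -/
def phi (i : ℕ) : ℕ := i * rho i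

/-- `index(α) = 4 · φ(max(3, ⌈log₂(2π/α)⌉ + 1))`. -/
def index (α : ℝ) : ℕ := 4 * phi (max 3 (⌈Real.logb 2 (2 * π / α)⌉ + 1)).toNat

/-! The pieces of Slicing(i) have angular width `w = 2π / 2^i`, and the choice of `i` makes
`2 w ≤ α`. Hence the arc `[a - α, a]` contains an arc `[K w, (K + 1) w]` with `K ∈ ℤ`, which
modulo `2π` is the angular range of the piece with index `K mod 2^i`. -/

theorem unitDir_add_int_mul_two_pi (θ : ℝ) (j : ℤ) : unitDir (θ + j * (2 * π)) = unitDir θ := by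
  simp only [unitDir, Real.cos_add_int_mul_two_pi, Real.sin_add_int_mul_two_pi]

theorem slicePiece_subset_sector (q : Pt) (x : ℝ) (i k : ℕ) (a α : ℝ) (j : ℤ)
    (hlo : a - α ≤ 2 * π * k / 2 ^ i + j * (2 * π))
    (hhi : 2 * π * (k + 1) / 2 ^ i + j * (2 * π) ≤ a) :
    slicePiece q x i k ⊆ sector q a α := by
  rintro y ⟨⟨r, hr, θ, hθk, hθk1, rfl⟩, -⟩
  refine ⟨r, hr, a - (θ + j * (2 * π)), by linarith, by linarith, ?_⟩
  rw [sub_sub_cancel, unitDir_add_int_mul_two_pi]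

theorem exists_int_mul_mem_Icc_of_two_mul_le {w α : ℝ} (hw : 0 < w) (hwα : 2 * w ≤ α) (a : ℝ) :
    ∃ K : ℤ, a - α ≤ K * w ∧ (K + 1) * w ≤ a := by
  refine ⟨⌊a / w⌋ - 1, ?_, ?_⟩
  · have := (div_lt_iff₀ hw).1 (Int.lt_floor_add_one (a / w))
    push_cast
    linarith
  · push_cast
    rw [sub_add_cancel, ← le_div_iff₀ hw]
    exact Int.floor_le _

theorem exists_lt_two_pow_int_mul_two_pi_div_eq (K : ℤ) (i : ℕ) :
    ∃ k : ℕ, k < 2 ^ i ∧ ∃ j : ℤ, (K : ℝ) * (2 * π / 2 ^ i) = 2 * π * k / 2 ^ i + j * (2 * π) := by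
  have h2i : (0 : ℤ) < 2 ^ i := by positivity
  have hk := Int.emod_nonneg K h2i.ne'
  refine ⟨(K % 2 ^ i).toNat, (Int.toNat_lt hk).2 (by exact_mod_cast Int.emod_lt_of_pos K h2i),
    K / 2 ^ i, ?_⟩
  have hK : (K : ℝ) = (K % 2 ^ i).toNat + 2 ^ i * (K / 2 ^ i : ℤ) := by
    exact_mod_cast (by rw [Int.toNat_of_nonneg hk, Int.emod_add_mul_ediv] :
      K = (K % 2 ^ i).toNat + 2 ^ i * (K / 2 ^ i))
  rw [hK]
  field_simp

theorem le_two_pow_toNat_ceil_logb {y : ℝ} (hy : 0 < y) : y ≤ 2 ^ ⌈logb 2 y⌉.toNat := by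
  have hceil : (⌈logb 2 y⌉ : ℝ) ≤ ⌈logb 2 y⌉.toNat := by
    exact_mod_cast Int.self_le_toNat ⌈logb 2 y⌉
  have h := (Real.logb_le_iff_le_rpow one_lt_two hy).1 ((Int.le_ceil (logb 2 y)).trans hceil)
  rwa [Real.rpow_natCast] at h

theorem two_mul_two_pi_div_two_pow_le {α : ℝ} (hα : 0 < α) :
    2 * (2 * π / 2 ^ (max 3 (⌈logb 2 (2 * π / α)⌉ + 1)).toNat) ≤ α := by
  set c := ⌈logb 2 (2 * π / α)⌉
  set i := (max 3 (c + 1)).toNat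
  have hci : c.toNat + 1 ≤ i := by omega
  have hpow : 2 * (2 * π / α) ≤ 2 ^ i := calc
    2 * (2 * π / α) ≤ 2 * 2 ^ c.toNat := by
      gcongr; exact le_two_pow_toNat_ceil_logb (by positivity)
    _ = 2 ^ (c.toNat + 1) := by ring
    _ ≤ 2 ^ i := pow_le_pow_right₀ one_le_two hci
  rw [mul_div_assoc', div_le_iff₀ hα] at hpow
  rw [mul_div_assoc', div_le_iff₀ (by positivity)]
  linarith

theorem sector_contains_slice_triangle_general (q : Pt) (x : ℝ)
    (α : ℝ) (hα : 0 < α) (a : ℝ) :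
    ∃ T : Set Pt, IsSliceTriangle q x (max 3 (⌈Real.logb 2 (2 * π / α)⌉ + 1)).toNat T ∧
      T ⊆ sector q a α := by
  set i := (max 3 (⌈Real.logb 2 (2 * π / α)⌉ + 1)).toNat
  obtain ⟨K, hlo, hhi⟩ := exists_int_mul_mem_Icc_of_two_mul_le (by positivity)
    (two_mul_two_pi_div_two_pow_le hα) a
  obtain ⟨k, hk, j, hKk⟩ := exists_lt_two_pow_int_mul_two_pi_div_eq K i
  refine ⟨slicePiece q x i k, ⟨k, hk, rfl⟩, slicePiece_subset_sector q x i k a α j ?_ ?_⟩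
  · linarith
  · linarith [show (K + 1 : ℝ) * (2 * π / 2 ^ i) = K * (2 * π / 2 ^ i) + 2 * π / 2 ^ i by ring,
      show 2 * π * (k + 1) / 2 ^ i = 2 * π * k / 2 ^ i + 2 * π / 2 ^ i by ring]

/-- Every closed angular sector of angle `α ∈ (0, 2π)` with apex at the center `q` of an
axis-aligned square `S` contains a triangle of `Slicing(max(3, ⌈log₂(2π/α)⌉ + 1))` of `S`. -/
theorem sector_contains_slice_triangle (q : Pt) (x : ℝ) (hx : 0 < x)
    (α : ℝ) (hα : 0 < α) (hα2 : α < 2 * π) (a : ℝ) :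
    ∃ T : Set Pt, IsSliceTriangle q x (max 3 (⌈Real.logb 2 (2 * π / α)⌉ + 1)).toNat T ∧
      T ⊆ sector q a α :=
  sector_contains_slice_triangle_general q x α hα a
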